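/- arXiv:1706.02529 — 2 statements merged into one kernel-verified Lean document; each statement's English description precedes it below -/
import Mathlib

section
/- In the algebra G_1 (one-generated free bicommutative algebra model), the right ideal generated by the elements { y^γ z : γ = 1, 2, ... } is not finitely generated as a right ideal. -/
open MvPolynomial

variable (K : Type) [Field K] (ι : Type)

/-- The ideal of the polynomial ring `K[Y,Z]` (variables `y_i = X (inl i)`,
`z_j = X (inr j)`) generated by the products `y_i * z_j`; its underlying `K`-vector
space is spanned by the monomials `Y^α Z^β` with `|α| > 0` and `|β| > 0`. -/
noncomputable def Vid : Ideal (MvPolynomial (ι ⊕ ι) K) :=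
  Ideal.span {p | ∃ i j, p = X (Sum.inl i) * X (Sum.inr j)}

/-- The linear polynomial `∑ a_i y_i`. -/
noncomputable def Yp (a : ι →₀ K) : MvPolynomial (ι ⊕ ι) K :=
  a.sum fun i c => C c * X (Sum.inl i)

/-- The linear polynomial `∑ b_j z_j`. -/
noncomputable def Zp (b : ι →₀ K) : MvPolynomial (ι ⊕ ι) K :=
  b.sum fun j c => C c * X (Sum.inr j)

/-- The model `G` of the free bicommutative algebra with generators `x_i` indexed
by `ι`: its elements are pairs (linear part in the `x_i`'s, element of the span of
the `v_{α,β} = Y^α Z^β`). -/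
abbrev GA : Type := (ι →₀ K) × (Vid K ι)

lemma mul_mem_Vid (a b : ι →₀ K) (p q : MvPolynomial (ι ⊕ ι) K)
    (hp : p ∈ Vid K ι) (hq : q ∈ Vid K ι) :
    (Yp K ι a + p) * (Zp K ι b + q) ∈ Vid K ι := by
  have hYZ : Yp K ι a * Zp K ι b ∈ Vid K ι := by
    rw [Yp, Zp, Finsupp.sum, Finsupp.sum, Finset.sum_mul_sum]
    refine Submodule.sum_mem _ fun i _ => Submodule.sum_mem _ fun j _ => ?_
    have h : (C (a i) * X (Sum.inl i)) * (C (b j) * X (Sum.inr j))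
        = (C (a i) * C (b j)) * (X (Sum.inl i) * X (Sum.inr j) :
          MvPolynomial (ι ⊕ ι) K) := by ring
    rw [h]
    exact Ideal.mul_mem_left _ _ (Ideal.subset_span ⟨i, j, rfl⟩)
  have e : (Yp K ι a + p) * (Zp K ι b + q)
      = Yp K ι a * Zp K ι b + (Yp K ι a * q + (p * Zp K ι b + p * q)) := by ring
  rw [e]
  exact add_mem hYZ (add_mem (Ideal.mul_mem_left _ _ hq)
    (add_mem (Ideal.mul_mem_right _ _ hp) (Ideal.mul_mem_left _ _ hq)))

/-- The multiplication of `G`: `x_i ∘ x_j = y_i z_j`, `x_i ∘ v_{α,β} = v_{α+ε_i,β}`,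
`v_{α,β} ∘ x_j = v_{α,β+ε_j}`, `v_{α,β} ∘ v_{γ,δ} = v_{α+γ,β+δ}`, extended bilinearly. -/
noncomputable instance : Mul (GA K ι) :=
  ⟨fun u v => (0, ⟨(Yp K ι u.1 + (u.2 : MvPolynomial (ι ⊕ ι) K)) *
      (Zp K ι v.1 + (v.2 : MvPolynomial (ι ⊕ ι) K)),
    mul_mem_Vid K ι u.1 v.1 _ _ u.2.2 v.2.2⟩)⟩

/-- The generator `x_i` of `G`. -/
noncomputable def xE (i : ι) : GA K ι := (Finsupp.single i 1, 0)

/-- The basis element `v_{α,β}` of `G²`, as a predicate on elements of `G`. -/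
def IsVElem (w : GA K ι) (α β : ι →₀ ℕ) : Prop :=
  w.1 = 0 ∧ (w.2 : MvPolynomial (ι ⊕ ι) K) = monomial (Finsupp.sumElim α β) 1

/-- The square `G²` of `G`: the linear span of all products. -/
noncomputable def Gsq : Submodule K (GA K ι) := Submodule.span K {w | ∃ u v : GA K ι, w = u * v}

/-- Two-sided ideals of the (nonassociative) algebra `G`: `K`-subspaces absorbing
multiplication on both sides. -/
def IsTwoSidedIdeal (I : Submodule K (GA K ι)) : Prop :=
  ∀ (a : GA K ι), ∀ x ∈ I, a * x ∈ I ∧ x * a ∈ I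

/-- Right ideals of `G`: subspaces `S` with `S ∘ G ⊆ S`. -/
def IsRightIdeal (S : Submodule K (GA K ι)) : Prop := ∀ (a : GA K ι), ∀ x ∈ S, x * a ∈ S

/-- The right ideal generated by a set: the smallest right ideal containing it. -/
noncomputable def rightIdealGen (T : Set (GA K ι)) : Submodule K (GA K ι) :=
  sInf {S : Submodule K (GA K ι) | IsRightIdeal K ι S ∧ T ⊆ ↑S}

/-!
Every product `x ∘ a` has zero linear part, and if `x` itself has zero linear part then
`x ∘ a` is divisible by `z²`, so it has no `y^γ z` component. Hence, for each `γ`, the elements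
with zero linear part and no `y^γ z` component form a right ideal. Finitely many generators of
the ideal all have zero linear part and, their supports being finite, no `y^γ z` component
for `γ` large; the right ideal they generate then misses `y^γ z`.
-/

open Filter

section Generators

variable {K ι}

theorem subset_rightIdealGen (T : Set (GA K ι)) : T ⊆ rightIdealGen K ι T :=
  fun _ ht => Submodule.mem_sInf.mpr fun _ hS => hS.2 ht

theorem rightIdealGen_le {T : Set (GA K ι)} {S : Submodule K (GA K ι)}
    (hS : IsRightIdeal K ι S) (hTS : T ⊆ S) : rightIdealGen K ι T ≤ S :=
  sInf_le ⟨hS, hTS⟩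

theorem GA.fst_mul (u v : GA K ι) : (u * v).1 = 0 := rfl

theorem GA.snd_mul (u v : GA K ι) :
    ((u * v).2 : MvPolynomial (ι ⊕ ι) K) = (Yp K ι u.1 + u.2) * (Zp K ι v.1 + v.2) := rfl

theorem isRightIdeal_ker_fst :
    IsRightIdeal K ι (LinearMap.ker (LinearMap.fst K (ι →₀ K) (Vid K ι))) :=
  fun a x _ => GA.fst_mul x a

theorem monomial_sumElim_mem_Vid {α β : ι →₀ ℕ} (hα : α ≠ 0) (hβ : β ≠ 0) (c : K) :
    monomial (Finsupp.sumElim α β) c ∈ Vid K ι := by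
  classical
  obtain ⟨i, hi⟩ := Finsupp.ne_iff.mp hα
  obtain ⟨j, hj⟩ := Finsupp.ne_iff.mp hβ
  have hle :
      Finsupp.single (Sum.inl i) 1 + Finsupp.single (Sum.inr j) 1 ≤ Finsupp.sumElim α β := by
    intro k
    rcases k with k | k
    · by_cases hk : k = i <;> simp_all; omega
    · by_cases hk : k = j <;> simp_all; omega
  have hXY : X (Sum.inl i) * X (Sum.inr j) =
      (monomial (Finsupp.single (Sum.inl i) 1 + Finsupp.single (Sum.inr j) 1) 1 :
        MvPolynomial (ι ⊕ ι) K) := by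
    rw [X, X, monomial_mul, one_mul]
  refine Ideal.mem_of_dvd _ ?_ (Ideal.subset_span ⟨i, j, rfl⟩)
  rw [hXY]
  exact monomial_dvd_monomial.mpr ⟨Or.inr hle, one_dvd c⟩

theorem exists_isVElem {α β : ι →₀ ℕ} (hα : α ≠ 0) (hβ : β ≠ 0) :
    ∃ w, IsVElem K ι w α β :=
  ⟨(0, ⟨_, monomial_sumElim_mem_Vid hα hβ 1⟩), rfl, rfl⟩

end Generators

section OneGenerator

variable {K}

noncomputable def yzExp (γ : ℕ) : Fin 1 ⊕ Fin 1 →₀ ℕ :=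
  Finsupp.sumElim (Finsupp.single 0 γ) (Finsupp.single 0 1)

theorem yzExp_injective : Function.Injective yzExp := by
  intro a b h
  simpa [yzExp] using DFunLike.congr_fun h (Sum.inl 0)

noncomputable def coeffYZ (γ : ℕ) : GA K (Fin 1) →ₗ[K] K where
  toFun w := coeff (yzExp γ) (w.2 : MvPolynomial (Fin 1 ⊕ Fin 1) K)
  map_add' u v := by simp
  map_smul' c w := by simp

theorem coeffYZ_apply (γ : ℕ) (w : GA K (Fin 1)) :
    coeffYZ γ w = coeff (yzExp γ) (w.2 : MvPolynomial (Fin 1 ⊕ Fin 1) K) := rfl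

theorem X_inr_dvd_of_mem_Vid {p : MvPolynomial (Fin 1 ⊕ Fin 1) K} (hp : p ∈ Vid K (Fin 1)) :
    X (Sum.inr 0) ∣ p := by
  rw [← Ideal.mem_span_singleton]
  refine Ideal.span_le.mpr ?_ hp
  rintro q ⟨i, j, rfl⟩
  rw [Subsingleton.elim j 0]
  exact Ideal.mul_mem_left _ _ (Ideal.subset_span rfl)

theorem X_inr_dvd_Zp (b : Fin 1 →₀ K) : X (Sum.inr 0) ∣ Zp K (Fin 1) b :=
  Finset.dvd_sum fun j _ => by rw [Subsingleton.elim j 0]; exact dvd_mul_left _ _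

theorem coeff_yzExp_X_inr_sq_mul (γ : ℕ) (q : MvPolynomial (Fin 1 ⊕ Fin 1) K) :
    coeff (yzExp γ) (X (Sum.inr 0) ^ 2 * q) = 0 := by
  rw [X_pow_eq_monomial, coeff_monomial_mul', if_neg]
  intro hle
  simpa [yzExp] using Finsupp.single_le_iff.mp hle

/-- The product lies in `z² K[y, z]`. -/
theorem coeffYZ_mul_eq_zero {x : GA K (Fin 1)} (hx : x.1 = 0) (a : GA K (Fin 1)) (γ : ℕ) :
    coeffYZ γ (x * a) = 0 := by
  obtain ⟨p, hp⟩ := X_inr_dvd_of_mem_Vid x.2.2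
  obtain ⟨q, hq⟩ := dvd_add (X_inr_dvd_Zp a.1) (X_inr_dvd_of_mem_Vid a.2.2)
  have hYp : Yp K (Fin 1) 0 = 0 := Finsupp.sum_zero_index
  rw [coeffYZ_apply, GA.snd_mul, hx, hYp, zero_add, hp, hq,
    show ∀ u v : MvPolynomial (Fin 1 ⊕ Fin 1) K, X (Sum.inr 0) * u * (X (Sum.inr 0) * v)
      = X (Sum.inr 0) ^ 2 * (u * v) from fun _ _ => by ring]
  exact coeff_yzExp_X_inr_sq_mul γ _

theorem isRightIdeal_ker_fst_inf_ker_coeffYZ (γ : ℕ) :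
    IsRightIdeal K (Fin 1)
      (LinearMap.ker (LinearMap.fst K (Fin 1 →₀ K) (Vid K (Fin 1))) ⊓
        LinearMap.ker (coeffYZ γ)) :=
  fun a x hx => ⟨GA.fst_mul x a, coeffYZ_mul_eq_zero hx.1 a γ⟩

theorem eventually_coeffYZ_eq_zero (w : GA K (Fin 1)) : ∀ᶠ γ in atTop, coeffYZ γ w = 0 := by
  rw [← Nat.cofinite_eq_atTop]
  have hfin := (w.2 : MvPolynomial (Fin 1 ⊕ Fin 1) K).support.finite_toSet.preimage
    yzExp_injective.injOn
  filter_upwards [hfin.compl_mem_cofinite] with γ hγ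
  simpa [coeffYZ_apply] using hγ

theorem coeffYZ_of_isVElem {w : GA K (Fin 1)} {γ : ℕ}
    (hw : IsVElem K (Fin 1) w (Finsupp.single 0 γ) (Finsupp.single 0 1)) : coeffYZ γ w = 1 := by
  rw [coeffYZ_apply, hw.2, yzExp, coeff_monomial, if_pos rfl]

end OneGenerator

/-- In the one-generated free bicommutative algebra `G_1`, the right ideal
generated by the elements `y^γ z`, `γ = 1, 2, …`, is not finitely generated as a
right ideal. -/
theorem G1_right_ideal_not_finitely_generated :
    ¬ ∃ T : Finset (GA K (Fin 1)),
        rightIdealGen K (Fin 1) ↑T =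
        rightIdealGen K (Fin 1)
          {w : GA K (Fin 1) | ∃ γ : ℕ, 1 ≤ γ ∧
            IsVElem K (Fin 1) w (Finsupp.single 0 γ) (Finsupp.single 0 1)} := by
  rintro ⟨T, hT⟩
  have hT_fst : ∀ t ∈ T, t.1 = 0 := by
    intro t ht
    have ht' : t ∈ rightIdealGen K (Fin 1) T := subset_rightIdealGen _ ht
    rw [hT] at ht'
    refine rightIdealGen_le isRightIdeal_ker_fst ?_ ht'
    rintro _ ⟨_, _, hw⟩
    exact hw.1
  obtain ⟨γ, hγ, hT_coeff⟩ := ((eventually_ge_atTop 1).and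
    ((eventually_all_finset T).mpr fun t _ => eventually_coeffYZ_eq_zero t)).exists
  obtain ⟨w, hw⟩ := exists_isVElem (K := K)
    (Finsupp.single_ne_zero.mpr (by omega : γ ≠ 0)) (Finsupp.single_ne_zero.mpr one_ne_zero)
  have hwT : w ∈ rightIdealGen K (Fin 1) T := by
    rw [hT]; exact subset_rightIdealGen _ ⟨γ, hγ, hw⟩
  have hw_coeff := (rightIdealGen_le (isRightIdeal_ker_fst_inf_ker_coeffYZ γ)
    (fun t ht => ⟨hT_fst t ht, hT_coeff t ht⟩) hwT).2
  exact one_ne_zero ((coeffYZ_of_isVElem hw).symm.trans hw_coeff)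
end

section
/- The algebra G_d satisfies the ascending chain condition on two-sided ideals: every ascending chain of two-sided ideals of G_d stabilizes. Equivalently, every two-sided ideal of G_d is finitely generated as a two-sided ideal. -/
open MvPolynomial

variable (K : Type) [Field K] (ι : Type)

/-- The two-sided ideal of `G` generated by a set: the smallest two-sided ideal
containing it. -/
noncomputable def twoSidedIdealGen (T : Set (GA K ι)) : Submodule K (GA K ι) :=
  sInf {S : Submodule K (GA K ι) | IsTwoSidedIdeal K ι S ∧ T ⊆ ↑S}

/-!
A subspace `I` of `G = (ι →₀ K) × G²` is determined, among the subspaces containing it, by its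
projection to the linear part `ι →₀ K` and by its trace `{q ∈ G² | (0, q) ∈ I}` (a modular
lattice argument). The projections lie in a finite-dimensional space, and since left and right
multiplication by `x_i` act on `G²` as multiplication by `y_i` and `z_i`, the traces are
`K[Y, Z]`-submodules of the ideal `G² ⊆ K[Y, Z]`, a noetherian module by Hilbert's basis theorem.
Hence two-sided ideals satisfy the ascending chain condition, and a maximal finitely generated
ideal inside a given one must be all of it.
-/

theorem Submodule.strictMono_map_fst_comap_inr {R M N : Type*} [Ring R] [AddCommGroup M]
    [AddCommGroup N] [Module R M] [Module R N] :
    StrictMono fun I : Submodule R (M × N) =>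
      (I.map (LinearMap.fst R M N), I.comap (LinearMap.inr R M N)) := by
  intro I J hIJ
  refine lt_of_le_of_ne ⟨map_mono hIJ.le, comap_mono hIJ.le⟩ fun h => hIJ.ne ?_
  obtain ⟨hfst, hinr⟩ := Prod.mk.inj h
  refine eq_of_le_of_inf_le_of_sup_le (z := LinearMap.ker (LinearMap.fst R M N)) hIJ.le ?_ ?_
  · rw [LinearMap.ker_fst, inf_comm, inf_comm I, ← map_comap_eq, ← map_comap_eq, hinr]
  · rw [← comap_map_eq, ← comap_map_eq, hfst]

def MvPolynomial.submoduleOfXSMulMem {R σ N : Type*} [CommSemiring R] [AddCommMonoid N]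
    [Module R N] [Module (MvPolynomial σ R) N] [IsScalarTower R (MvPolynomial σ R) N]
    (V : Submodule R N) (hV : ∀ v, ∀ x ∈ V, (X v : MvPolynomial σ R) • x ∈ V) :
    Submodule (MvPolynomial σ R) N where
  toAddSubmonoid := V.toAddSubmonoid
  smul_mem' f x (hx : x ∈ V) := show f • x ∈ V by
    induction f using MvPolynomial.induction_on generalizing x with
    | C c => simpa only [← algebraMap_eq, algebraMap_smul] using V.smul_mem c hx
    | add f g hf hg => simpa only [add_smul] using V.add_mem (hf x hx) (hg x hx)
    | mul_X f v hf => simpa only [mul_smul] using hf _ (hV v x hx)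

section

variable {K ι}

@[simp] lemma Yp_zero : Yp K ι 0 = 0 := Finsupp.sum_zero_index

@[simp] lemma Zp_zero : Zp K ι 0 = 0 := Finsupp.sum_zero_index

@[simp] lemma Yp_single_one (i : ι) : Yp K ι (Finsupp.single i 1) = X (Sum.inl i) := by
  simp [Yp]

@[simp] lemma Zp_single_one (j : ι) : Zp K ι (Finsupp.single j 1) = X (Sum.inr j) := by
  simp [Zp]

lemma xE_mul_zero_prod (i : ι) (q : Vid K ι) :
    xE K ι i * (0, q) = (0, (X (Sum.inl i) : MvPolynomial (ι ⊕ ι) K) • q) :=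
  Prod.ext rfl <| Subtype.ext <| show (Yp K ι _ + 0) * (Zp K ι 0 + q) = _ by simp [xE]

lemma zero_prod_mul_xE (j : ι) (q : Vid K ι) :
    (0, q) * xE K ι j = (0, (X (Sum.inr j) : MvPolynomial (ι ⊕ ι) K) • q) :=
  Prod.ext rfl <| Subtype.ext <| show (Yp K ι 0 + q) * (Zp K ι _ + 0) = _ by simp [xE, mul_comm]

lemma IsTwoSidedIdeal.X_smul_mem_comap_inr {I : Submodule K (GA K ι)}
    (hI : IsTwoSidedIdeal K ι I) (v : ι ⊕ ι) (q : Vid K ι)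
    (hq : q ∈ I.comap (LinearMap.inr K (ι →₀ K) (Vid K ι))) :
    (X v : MvPolynomial (ι ⊕ ι) K) • q ∈ I.comap (LinearMap.inr K (ι →₀ K) (Vid K ι)) := by
  rcases v with i | j
  · simpa only [Submodule.mem_comap, LinearMap.inr_apply, xE_mul_zero_prod] using
      (hI (xE K ι i) _ hq).1
  · simpa only [Submodule.mem_comap, LinearMap.inr_apply, zero_prod_mul_xE] using
      (hI (xE K ι j) _ hq).2

noncomputable def traceSubmodule (I : {I : Submodule K (GA K ι) // IsTwoSidedIdeal K ι I}) :
    Submodule (MvPolynomial (ι ⊕ ι) K) (Vid K ι) :=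
  submoduleOfXSMulMem (I.1.comap (LinearMap.inr K (ι →₀ K) (Vid K ι))) I.2.X_smul_mem_comap_inr

theorem strictMono_map_fst_traceSubmodule :
    StrictMono fun I : {I : Submodule K (GA K ι) // IsTwoSidedIdeal K ι I} =>
      (I.1.map (LinearMap.fst K (ι →₀ K) (Vid K ι)), traceSubmodule I) := fun _ _ hIJ =>
  lt_of_le_not_ge ⟨Submodule.map_mono hIJ.le, fun _ hq => hIJ.le hq⟩ fun hJI =>
    (Submodule.strictMono_map_fst_comap_inr hIJ).not_ge ⟨hJI.1, hJI.2⟩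

theorem wellFoundedGT_isTwoSidedIdeal [Finite ι] :
    WellFoundedGT {I : Submodule K (GA K ι) // IsTwoSidedIdeal K ι I} :=
  strictMono_map_fst_traceSubmodule.wellFoundedGT

lemma isTwoSidedIdeal_twoSidedIdealGen (T : Set (GA K ι)) :
    IsTwoSidedIdeal K ι (twoSidedIdealGen K ι T) := fun a x hx => by
  simp only [twoSidedIdealGen, Submodule.mem_sInf] at hx ⊢
  exact ⟨fun S hS => (hS.1 a x (hx S hS)).1, fun S hS => (hS.1 a x (hx S hS)).2⟩

lemma subset_twoSidedIdealGen (T : Set (GA K ι)) : T ⊆ twoSidedIdealGen K ι T := fun _ hx =>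
  Submodule.mem_sInf.2 fun _ hS => hS.2 hx

lemma twoSidedIdealGen_le {T : Set (GA K ι)} {I : Submodule K (GA K ι)}
    (hI : IsTwoSidedIdeal K ι I) (hT : T ⊆ I) : twoSidedIdealGen K ι T ≤ I :=
  sInf_le ⟨hI, hT⟩

lemma twoSidedIdealGen_mono {T U : Set (GA K ι)} (h : T ⊆ U) :
    twoSidedIdealGen K ι T ≤ twoSidedIdealGen K ι U :=
  twoSidedIdealGen_le (isTwoSidedIdeal_twoSidedIdealGen U) (h.trans (subset_twoSidedIdealGen U))

theorem IsTwoSidedIdeal.exists_finset_eq_twoSidedIdealGen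
    [WellFoundedGT {I : Submodule K (GA K ι) // IsTwoSidedIdeal K ι I}]
    {I : Submodule K (GA K ι)} (hI : IsTwoSidedIdeal K ι I) :
    ∃ T : Finset (GA K ι), I = twoSidedIdealGen K ι T := by
  classical
  let gen (T : Finset (GA K ι)) : {I : Submodule K (GA K ι) // IsTwoSidedIdeal K ι I} :=
    ⟨twoSidedIdealGen K ι T, isTwoSidedIdeal_twoSidedIdealGen _⟩
  obtain ⟨_, ⟨T, hTI, rfl⟩, hmax⟩ :=
    wellFounded_gt.has_min (gen '' {T | ↑T ⊆ (I : Set (GA K ι))}) ⟨_, ∅, by simp, rfl⟩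
  refine ⟨T, le_antisymm (fun x hx => ?_) (twoSidedIdealGen_le hI hTI)⟩
  have heq : twoSidedIdealGen K ι T = twoSidedIdealGen K ι ↑(insert x T) :=
    congrArg Subtype.val <| eq_of_le_of_not_lt (twoSidedIdealGen_mono (by simp))
      (hmax _ ⟨insert x T, by simpa using Set.insert_subset hx hTI, rfl⟩)
  rw [heq]
  exact subset_twoSidedIdealGen _ (by simp)

end

/-- The algebra `G_d` satisfies the ascending chain condition on two-sided ideals:
every ascending chain of two-sided ideals stabilizes.  Equivalently, every
two-sided ideal of `G_d` is finitely generated as a two-sided ideal. -/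
theorem Gd_acc_two_sided_ideals (d : ℕ) :
    (∀ I : ℕ → Submodule K (GA K (Fin d)),
      (∀ n, IsTwoSidedIdeal K (Fin d) (I n)) → Monotone I →
      ∃ N, ∀ n, N ≤ n → I n = I N) ∧
    (∀ I : Submodule K (GA K (Fin d)), IsTwoSidedIdeal K (Fin d) I →
      ∃ T : Finset (GA K (Fin d)), I = twoSidedIdealGen K (Fin d) ↑T) := by
  have := wellFoundedGT_isTwoSidedIdeal (K := K) (ι := Fin d)
  refine ⟨fun I hI hmono => ?_, fun I hI => hI.exists_finset_eq_twoSidedIdealGen⟩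
  obtain ⟨N, hN⟩ := WellFoundedGT.monotone_chain_condition
    (⟨fun n => ⟨I n, hI n⟩, hmono⟩ : ℕ →o {I // IsTwoSidedIdeal K (Fin d) I})
  exact ⟨N, fun n hn => congrArg Subtype.val (hN n hn).symm⟩
end
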